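/- Let G be a finite group, M a semi-Mackey functor on G, and S ⊆ M(G/e) a saturated G-invariant submonoid of the monoid M evaluated at the free orbit G/e. For each transitive finite G-set X, define ℒ_S(X) = γ_{X*}(S) for any G-map γ_X : G/e → X. Then this definition is independent of the choice of γ_X, and ℒ_S (extended additively to all finite G-sets) is a semi-Mackey subfunctor of M satisfying ℒ_S(G/e) = S; moreover it is the minimum semi-Mackey subfunctor 𝒮 with S ⊆ 𝒮(G/e). -/

import Mathlib

/-- A finite `G`-set: a finite type equipped with a `G`-action. -/
structure FinGSet (G : Type) [Group G] where
  carrier : Type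
  [fin : Fintype carrier]
  [act : MulAction G carrier]

attribute [instance] FinGSet.fin FinGSet.act

/-- A map of `G`-sets is equivariant if it commutes with the action. -/
def IsEquivariant {G : Type} [Group G] {X Y : FinGSet G}
    (f : X.carrier → Y.carrier) : Prop :=
  ∀ (g : G) (x : X.carrier), f (g • x) = g • f x

/-- The disjoint union of two finite `G`-sets. -/
def FinGSet.sum {G : Type} [Group G] (X Y : FinGSet G) : FinGSet G where
  carrier := X.carrier ⊕ Y.carrier

/-- A semi-Mackey functor on `G` with underlying family of commutative monoids `N`:
a contravariant functor `res` (restriction) and a covariant functor `tr`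
(transfer) on finite `G`-sets, additive on disjoint unions and satisfying the
Mackey (base change) condition on all pullback diagrams. -/
structure SemiMackey (G : Type) [Group G] (N : FinGSet G → Type)
    [∀ X, CommMonoid (N X)] where
  res : ∀ {X Y : FinGSet G} (f : X.carrier → Y.carrier), IsEquivariant f → (N Y →* N X)
  tr : ∀ {X Y : FinGSet G} (f : X.carrier → Y.carrier), IsEquivariant f → (N X →* N Y)
  res_id : ∀ (X : FinGSet G) (h : IsEquivariant (id : X.carrier → X.carrier)) (m : N X),
    res id h m = m
  tr_id : ∀ (X : FinGSet G) (h : IsEquivariant (id : X.carrier → X.carrier)) (m : N X),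
    tr id h m = m
  res_comp : ∀ {X Y Z : FinGSet G} (f : X.carrier → Y.carrier) (hf : IsEquivariant f)
    (g : Y.carrier → Z.carrier) (hg : IsEquivariant g)
    (hgf : IsEquivariant (g ∘ f)) (m : N Z),
    res (g ∘ f) hgf m = res f hf (res g hg m)
  tr_comp : ∀ {X Y Z : FinGSet G} (f : X.carrier → Y.carrier) (hf : IsEquivariant f)
    (g : Y.carrier → Z.carrier) (hg : IsEquivariant g)
    (hgf : IsEquivariant (g ∘ f)) (m : N X),
    tr (g ∘ f) hgf m = tr g hg (tr f hf m)
  additive : ∀ (X Y : FinGSet G)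
    (h₁ : IsEquivariant (X := X) (Y := FinGSet.sum X Y) Sum.inl)
    (h₂ : IsEquivariant (X := Y) (Y := FinGSet.sum X Y) Sum.inr),
    Function.Bijective (fun m : N (FinGSet.sum X Y) => (res Sum.inl h₁ m, res Sum.inr h₂ m))
  mackey : ∀ {P X W Y : FinGSet G}
    (f : X.carrier → Y.carrier) (hf : IsEquivariant f)
    (g : W.carrier → Y.carrier) (hg : IsEquivariant g)
    (pX : P.carrier → X.carrier) (hpX : IsEquivariant pX)
    (pW : P.carrier → W.carrier) (hpW : IsEquivariant pW)
    (hcomm : ∀ p, f (pX p) = g (pW p)),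
    Function.Bijective
      (fun p : P.carrier =>
        (⟨(pX p, pW p), hcomm p⟩ : {q : X.carrier × W.carrier // f q.1 = g q.2})) →
    ∀ m : N W, res f hf (tr g hg m) = tr pX hpX (res pW hpW m)

/-- The saturation of a subset of a commutative monoid. -/
def satSet {M : Type*} [CommMonoid M] (S : Set M) : Set M :=
  {x | ∃ a : M, ∃ s ∈ S, a * x = s}

/-- The free orbit `G/e`, i.e. `G` with the left translation action. -/
abbrev GeObj (G : Type) [Group G] [Fintype G] : FinGSet G where
  carrier := G

theorem rmul_equivariant {G : Type} [Group G] [Fintype G] (g : G) :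
    IsEquivariant (X := GeObj G) (Y := GeObj G) (fun x => x * g) :=
  fun a x => by simp [GeObj, smul_eq_mul, mul_assoc]

/-- The subfunctor `ℒ_S` generated by a subset of `M(G/e)`: on each `X` it is
the submonoid generated by the images of `S` under all transfers along
equivariant maps `G/e → X`. -/
def minSub {G : Type} [Group G] [Fintype G] {N : FinGSet G → Type}
    [∀ X, CommMonoid (N X)] (M : SemiMackey G N)
    (S : Submonoid (N (GeObj G))) : ∀ X : FinGSet G, Submonoid (N X) :=
  fun X => Submonoid.closure
    (⋃ (γ : (GeObj G).carrier → X.carrier) (hγ : IsEquivariant γ),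
      (M.tr γ hγ) '' (S : Set (N (GeObj G))))

/-!
`ℒ_S(X)` is generated by the transfers `γ_* s` with `γ : G/e → X` and `s ∈ S`. Such a `γ` is
`x ↦ x • γ(1)`, so any two of them differ by a right translation of `G/e`, and transfers and
restrictions along right translations preserve `S` by `G`-invariance; this gives `ℒ_S(G/e) = S`
and `ℒ_S(X) = γ_{X*}(S)` for transitive `X`. Closure under transfers is functoriality. For a
restriction, the Mackey formula rewrites `f^* γ_* s` as `p_* q^* s` over the pullback `P`; since
`P` maps to `G/e` it is free, so splitting off one orbit (a copy of `G/e`) at a time and using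
additivity writes `p_* q^* s` as a product of generators.
-/

section Equivariant

variable {G : Type} [Group G]

theorem isEquivariant_id (X : FinGSet G) : IsEquivariant (id : X.carrier → X.carrier) :=
  fun _ _ => rfl

theorem IsEquivariant.comp {X Y Z : FinGSet G} {g : Y.carrier → Z.carrier}
    {f : X.carrier → Y.carrier} (hg : IsEquivariant g) (hf : IsEquivariant f) :
    IsEquivariant (g ∘ f) :=
  fun a x => by simp only [Function.comp_apply, hf a x, hg a (f x)]

theorem IsEquivariant.surjInv {X Y : FinGSet G} {f : X.carrier → Y.carrier}
    (hf : IsEquivariant f) (hinj : Function.Injective f) (hsurj : Function.Surjective f) :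
    IsEquivariant (Function.surjInv hsurj) := fun a y => by
  apply hinj
  rw [hf, Function.surjInv_eq hsurj, Function.surjInv_eq hsurj]

theorem isEquivariant_inl (X Y : FinGSet G) :
    IsEquivariant (X := X) (Y := X.sum Y) Sum.inl :=
  fun _ _ => rfl

theorem isEquivariant_inr (X Y : FinGSet G) :
    IsEquivariant (X := Y) (Y := X.sum Y) Sum.inr :=
  fun _ _ => rfl

theorem IsEquivariant.sumElim {X Y Z : FinGSet G} {f : X.carrier → Z.carrier}
    {g : Y.carrier → Z.carrier} (hf : IsEquivariant f) (hg : IsEquivariant g) :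
    IsEquivariant (X := X.sum Y) (Sum.elim f g)
  | a, .inl x => hf a x
  | a, .inr y => hg a y

theorem IsEquivariant.apply_eq_smul_apply_one [Fintype G] {X : FinGSet G}
    {γ : (GeObj G).carrier → X.carrier} (hγ : IsEquivariant γ) (x : G) : γ x = x • γ 1 := by
  simpa using hγ x 1

end Equivariant

namespace FinGSet

variable {G : Type} [Group G]

noncomputable abbrev ofSubMulAction {α : Type} [MulAction G α] [Finite α]
    (A : SubMulAction G α) : FinGSet G where
  carrier := A
  fin := Fintype.ofFinite _

noncomputable abbrev pullback {X W Y : FinGSet G} {f : X.carrier → Y.carrier}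
    (hf : IsEquivariant f) {g : W.carrier → Y.carrier} (hg : IsEquivariant g) : FinGSet G :=
  ofSubMulAction
    { carrier := {q : X.carrier × W.carrier | f q.1 = g q.2}
      smul_mem' := fun a q (hq : f q.1 = g q.2) =>
        show f (a • q.1) = g (a • q.2) by rw [hf, hg, hq] }

variable {X W Y : FinGSet G} {f : X.carrier → Y.carrier} {g : W.carrier → Y.carrier}

abbrev pullbackFst (hf : IsEquivariant f) (hg : IsEquivariant g) :
    (pullback hf hg).carrier → X.carrier :=
  fun z => z.1.1

abbrev pullbackSnd (hf : IsEquivariant f) (hg : IsEquivariant g) :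
    (pullback hf hg).carrier → W.carrier :=
  fun z => z.1.2

theorem isEquivariant_pullbackFst (hf : IsEquivariant f) (hg : IsEquivariant g) :
    IsEquivariant (pullbackFst hf hg) :=
  fun _ _ => rfl

theorem isEquivariant_pullbackSnd (hf : IsEquivariant f) (hg : IsEquivariant g) :
    IsEquivariant (pullbackSnd hf hg) :=
  fun _ _ => rfl

theorem pullbackFst_comm (hf : IsEquivariant f) (hg : IsEquivariant g)
    (z : (pullback hf hg).carrier) : f (pullbackFst hf hg z) = g (pullbackSnd hf hg z) :=
  z.2

noncomputable abbrev complOrbit (P : FinGSet G) (x : P.carrier) : FinGSet G :=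
  ofSubMulAction
    { carrier := (MulAction.orbit G x)ᶜ
      smul_mem' := fun a y hy hay => hy <| by
        rwa [← MulAction.orbit_eq_iff, MulAction.orbit_smul, MulAction.orbit_eq_iff] at hay }

theorem card_complOrbit_lt (P : FinGSet G) (x : P.carrier) :
    Nat.card (P.complOrbit x).carrier < Nat.card P.carrier :=
  Finite.card_subtype_lt (x := x) (not_not.2 (MulAction.mem_orbit_self x))

/-- Over a free `G`-set, the orbit of `x` is a copy of `G/e`; this map splits it off. -/
def splitOrbit [Fintype G] (P : FinGSet G) (x : P.carrier) :
    ((GeObj G).sum (P.complOrbit x)).carrier → P.carrier :=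
  Sum.elim (fun g : G => g • x) Subtype.val

theorem isEquivariant_splitOrbit [Fintype G] (P : FinGSet G) (x : P.carrier) :
    IsEquivariant (P.splitOrbit x) :=
  IsEquivariant.sumElim (fun a g => mul_smul a g x) (fun _ _ => rfl)

theorem bijective_splitOrbit [Fintype G] {P : FinGSet G} {q : P.carrier → (GeObj G).carrier}
    (hq : IsEquivariant q) (x : P.carrier) : Function.Bijective (P.splitOrbit x) := by
  refine ⟨Function.Injective.sumElim (fun g h hgh => ?_) Subtype.val_injective
    fun g y hgy => y.2 ⟨g, hgy⟩, fun y => ?_⟩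
  · have hqgh := congrArg q hgh
    rw [hq, hq] at hqgh
    exact mul_right_cancel hqgh
  · by_cases hy : y ∈ MulAction.orbit G x
    · obtain ⟨g, rfl⟩ := hy
      exact ⟨.inl g, rfl⟩
    · exact ⟨.inr ⟨y, hy⟩, rfl⟩

end FinGSet

namespace SemiMackey

variable {G : Type} [Group G] {N : FinGSet G → Type} [∀ X, CommMonoid (N X)]
  (M : SemiMackey G N)

theorem res_congr {X Y : FinGSet G} {f f' : X.carrier → Y.carrier} (h : f = f')
    (hf : IsEquivariant f) (hf' : IsEquivariant f') (m : N Y) :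
    M.res f hf m = M.res f' hf' m := by
  subst h; rfl

theorem tr_congr {X Y : FinGSet G} {f f' : X.carrier → Y.carrier} (h : f = f')
    (hf : IsEquivariant f) (hf' : IsEquivariant f') (m : N X) :
    M.tr f hf m = M.tr f' hf' m := by
  subst h; rfl

theorem res_tr_eq_tr_res_pullback {X W Y : FinGSet G} (f : X.carrier → Y.carrier)
    (hf : IsEquivariant f) (g : W.carrier → Y.carrier) (hg : IsEquivariant g) (m : N W) :
    M.res f hf (M.tr g hg m) =
      M.tr _ (FinGSet.isEquivariant_pullbackFst hf hg)
        (M.res _ (FinGSet.isEquivariant_pullbackSnd hf hg) m) :=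
  M.mackey f hf g hg _ _ _ _ (FinGSet.pullbackFst_comm hf hg)
    ⟨fun _ _ h => Subtype.ext (congrArg Subtype.val h), fun z => ⟨z, rfl⟩⟩ m

/-- The Mackey formula for the square with two copies of `f` and the diagonal of `X` as
pullback. -/
theorem res_tr_of_injective {X Y : FinGSet G} (f : X.carrier → Y.carrier)
    (hf : IsEquivariant f) (hinj : Function.Injective f) (m : N X) :
    M.res f hf (M.tr f hf m) = m := by
  rw [M.mackey f hf f hf id (isEquivariant_id X) id (isEquivariant_id X) (fun _ => rfl)
    ⟨fun _ _ h => congrArg (·.1.1) h, fun ⟨(a, _), hab⟩ => ⟨a, Subtype.ext (Prod.ext rfl (hinj hab))⟩⟩ m,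
    M.tr_id, M.res_id]

theorem tr_res_of_bijective {X Y : FinGSet G} (f : X.carrier → Y.carrier)
    (hf : IsEquivariant f) (hbij : Function.Bijective f) (m : N Y) :
    M.tr f hf (M.res f hf m) = m := by
  obtain ⟨hinj, hsurj⟩ := hbij
  have hg := hf.surjInv hinj hsurj
  have res_leftInverse : Function.LeftInverse (M.res _ hg) (M.res f hf) := fun m => by
    rw [← M.res_comp _ hg f hf (hf.comp hg),
      M.res_congr (f := f ∘ Function.surjInv hsurj) (f' := id) (funext (Function.surjInv_eq hsurj))
        _ (isEquivariant_id Y), M.res_id]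
  exact res_leftInverse.injective (M.res_tr_of_injective f hf hinj _)

theorem tr_eq_res_of_leftInverse {X Y : FinGSet G} (f : X.carrier → Y.carrier)
    (hf : IsEquivariant f) (g : Y.carrier → X.carrier) (hg : IsEquivariant g)
    (hgf : Function.LeftInverse g f) (hbij : Function.Bijective f) (m : N X) :
    M.tr f hf m = M.res g hg m := by
  conv_lhs => rw [← M.res_id X (isEquivariant_id X) m,
    ← M.res_congr (f := g ∘ f) (f' := id) (funext hgf) (hg.comp hf), M.res_comp f hf g hg]
  exact M.tr_res_of_bijective f hf hbij _

theorem tr_res_comp_of_bijective {P Q X Y : FinGSet G} (e : Q.carrier → P.carrier)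
    (he : IsEquivariant e) (hbij : Function.Bijective e) (p : P.carrier → X.carrier)
    (hp : IsEquivariant p) (q : P.carrier → Y.carrier) (hq : IsEquivariant q) (m : N Y) :
    M.tr p hp (M.res q hq m) = M.tr (p ∘ e) (hp.comp he) (M.res (q ∘ e) (hq.comp he) m) := by
  rw [M.tr_comp e he p hp, M.res_comp e he q hq, M.tr_res_of_bijective e he hbij]

/-- By additivity, `N` of an empty `G`-set `X` is trivial: `X ⊔ X` has two equal restrictions
to `X`. -/
theorem tr_of_isEmpty {X Y : FinGSet G} [IsEmpty X.carrier] (f : X.carrier → Y.carrier)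
    (hf : IsEquivariant f) (m : N X) : M.tr f hf m = 1 := by
  obtain ⟨m', hm'⟩ := (M.additive X X (isEquivariant_inl X X) (isEquivariant_inr X X)).2 (m, 1)
  have hinl_eq_inr := M.res_congr (f := (Sum.inl : X.carrier → (X.sum X).carrier)) (f' := Sum.inr)
    (funext isEmptyElim) (isEquivariant_inl X X) (isEquivariant_inr X X) m'
  have hm_eq_one : m = 1 :=
    (congrArg Prod.fst hm').symm.trans (hinl_eq_inr.trans (congrArg Prod.snd hm'))
  rw [hm_eq_one, map_one]

theorem res_tr_eq_one_of_disjoint {X W Y : FinGSet G} (f : X.carrier → Y.carrier)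
    (hf : IsEquivariant f) (g : W.carrier → Y.carrier) (hg : IsEquivariant g)
    (hfg : ∀ x w, f x ≠ g w) (m : N W) : M.res f hf (M.tr g hg m) = 1 := by
  have : IsEmpty (FinGSet.pullback hf hg).carrier := ⟨fun z => hfg _ _ z.2⟩
  rw [M.res_tr_eq_tr_res_pullback, M.tr_of_isEmpty]

theorem eq_tr_res_inl_mul_tr_res_inr {X Y : FinGSet G} (m : N (X.sum Y)) :
    m = M.tr Sum.inl (isEquivariant_inl X Y) (M.res Sum.inl (isEquivariant_inl X Y) m) *
      M.tr Sum.inr (isEquivariant_inr X Y) (M.res Sum.inr (isEquivariant_inr X Y) m) := by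
  apply (M.additive X Y (isEquivariant_inl X Y) (isEquivariant_inr X Y)).1
  have hinl := isEquivariant_inl X Y
  have hinr := isEquivariant_inr X Y
  simp only [map_mul, M.res_tr_of_injective _ hinl Sum.inl_injective,
    M.res_tr_of_injective _ hinr Sum.inr_injective,
    M.res_tr_eq_one_of_disjoint _ hinl _ hinr fun _ _ => Sum.inl_ne_inr,
    M.res_tr_eq_one_of_disjoint _ hinr _ hinl fun _ _ => Sum.inr_ne_inl, mul_one, one_mul]

theorem tr_res_sum {X Y Z W : FinGSet G} (p : (X.sum Y).carrier → Z.carrier)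
    (hp : IsEquivariant p) (q : (X.sum Y).carrier → W.carrier) (hq : IsEquivariant q)
    (m : N W) :
    M.tr p hp (M.res q hq m) =
      M.tr (p ∘ Sum.inl) (hp.comp (isEquivariant_inl X Y))
          (M.res (q ∘ Sum.inl) (hq.comp (isEquivariant_inl X Y)) m) *
        M.tr (p ∘ Sum.inr) (hp.comp (isEquivariant_inr X Y))
          (M.res (q ∘ Sum.inr) (hq.comp (isEquivariant_inr X Y)) m) := by
  conv_lhs => rw [M.eq_tr_res_inl_mul_tr_res_inr (M.res q hq m)]
  rw [map_mul, M.tr_comp _ (isEquivariant_inl X Y) p hp, M.tr_comp _ (isEquivariant_inr X Y) p hp,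
    M.res_comp _ (isEquivariant_inl X Y) q hq, M.res_comp _ (isEquivariant_inr X Y) q hq]

end SemiMackey

section minSub

variable {G : Type} [Group G] [Fintype G] {N : FinGSet G → Type} [∀ X, CommMonoid (N X)]
  (M : SemiMackey G N) (S : Submonoid (N (GeObj G)))

theorem res_mem_of_isEquivariant_endo
    (hinv : ∀ g : G, ∀ s ∈ S, M.res (fun x => x * g) (rmul_equivariant g) s ∈ S)
    {γ : (GeObj G).carrier → (GeObj G).carrier} (hγ : IsEquivariant γ) {s : N (GeObj G)}
    (hs : s ∈ S) : M.res γ hγ s ∈ S := by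
  rw [M.res_congr (funext hγ.apply_eq_smul_apply_one) hγ (rmul_equivariant (γ 1))]
  exact hinv _ s hs

theorem tr_mem_of_isEquivariant_endo
    (hinv : ∀ g : G, ∀ s ∈ S, M.res (fun x => x * g) (rmul_equivariant g) s ∈ S)
    {γ : (GeObj G).carrier → (GeObj G).carrier} (hγ : IsEquivariant γ) {s : N (GeObj G)}
    (hs : s ∈ S) : M.tr γ hγ s ∈ S := by
  rw [M.tr_congr (funext hγ.apply_eq_smul_apply_one) hγ (rmul_equivariant (γ 1)),
    M.tr_eq_res_of_leftInverse _ _ _ (rmul_equivariant (γ 1)⁻¹) (fun x => mul_inv_cancel_right x _)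
      ⟨mul_left_injective _, fun x => ⟨x * (γ 1)⁻¹, inv_mul_cancel_right x _⟩⟩]
  exact hinv _ s hs

theorem tr_mem_minSub {X : FinGSet G} (γ : (GeObj G).carrier → X.carrier)
    (hγ : IsEquivariant γ) {s : N (GeObj G)} (hs : s ∈ S) : M.tr γ hγ s ∈ minSub M S X :=
  Submonoid.subset_closure (Set.mem_iUnion₂.2 ⟨γ, hγ, s, hs, rfl⟩)

theorem minSub_le_iff {X : FinGSet G} {T : Submonoid (N X)} :
    minSub M S X ≤ T ↔ ∀ γ hγ, ∀ s ∈ S, M.tr γ hγ s ∈ T := by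
  simp only [minSub, Submonoid.closure_le, Set.iUnion₂_subset_iff, Set.image_subset_iff]
  rfl

theorem tr_res_mem_minSub
    (hinv : ∀ g : G, ∀ s ∈ S, M.res (fun x => x * g) (rmul_equivariant g) s ∈ S)
    {P X : FinGSet G} (q : P.carrier → (GeObj G).carrier) (hq : IsEquivariant q)
    (p : P.carrier → X.carrier) (hp : IsEquivariant p) {s : N (GeObj G)} (hs : s ∈ S) :
    M.tr p hp (M.res q hq s) ∈ minSub M S X := by
  induction hn : Nat.card P.carrier using Nat.strong_induction_on generalizing P with
  | _ n ih =>
  cases isEmpty_or_nonempty P.carrier with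
  | inl => rw [M.tr_of_isEmpty]; exact one_mem _
  | inr hP =>
    obtain ⟨x⟩ := hP
    rw [M.tr_res_comp_of_bijective _ (P.isEquivariant_splitOrbit x)
      (FinGSet.bijective_splitOrbit hq x), M.tr_res_sum]
    exact mul_mem (tr_mem_minSub M S _ _ (res_mem_of_isEquivariant_endo M S hinv _ hs))
      (ih _ (hn ▸ P.card_complOrbit_lt x) _ _ _ _ rfl)

theorem minSub_le_comap_res
    (hinv : ∀ g : G, ∀ s ∈ S, M.res (fun x => x * g) (rmul_equivariant g) s ∈ S)
    {X Y : FinGSet G} (f : X.carrier → Y.carrier) (hf : IsEquivariant f) :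
    minSub M S Y ≤ (minSub M S X).comap (M.res f hf) :=
  (minSub_le_iff M S).2 fun γ hγ s hs => by
    rw [Submonoid.mem_comap, M.res_tr_eq_tr_res_pullback]
    exact tr_res_mem_minSub M S hinv _ _ _ _ hs

theorem minSub_le_comap_tr {X Y : FinGSet G} (f : X.carrier → Y.carrier)
    (hf : IsEquivariant f) : minSub M S X ≤ (minSub M S Y).comap (M.tr f hf) :=
  (minSub_le_iff M S).2 fun γ hγ s hs => by
    rw [Submonoid.mem_comap, ← M.tr_comp γ hγ f hf (hf.comp hγ)]
    exact tr_mem_minSub M S _ _ hs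

theorem minSub_geObj
    (hinv : ∀ g : G, ∀ s ∈ S, M.res (fun x => x * g) (rmul_equivariant g) s ∈ S) :
    minSub M S (GeObj G) = S :=
  le_antisymm ((minSub_le_iff M S).2 fun _ hγ _ hs => tr_mem_of_isEquivariant_endo M S hinv hγ hs)
    fun s hs => M.tr_id _ (isEquivariant_id _) s ▸ tr_mem_minSub M S id _ hs

/-- Two maps `G/e → X` into a transitive `X` differ by a right translation of `G/e`. -/
theorem minSub_eq_map_of_isPretransitive
    (hinv : ∀ g : G, ∀ s ∈ S, M.res (fun x => x * g) (rmul_equivariant g) s ∈ S)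
    {X : FinGSet G} [MulAction.IsPretransitive G X.carrier]
    (γ : (GeObj G).carrier → X.carrier) (hγ : IsEquivariant γ) :
    minSub M S X = S.map (M.tr γ hγ) := by
  refine le_antisymm ((minSub_le_iff M S).2 fun δ hδ s hs => ?_) ?_
  · obtain ⟨h, hh⟩ := MulAction.exists_smul_eq G (γ 1) (δ 1)
    have hδ_eq : δ = γ ∘ fun x => x * h := funext fun x => by
      rw [hδ.apply_eq_smul_apply_one, Function.comp_apply, hγ.apply_eq_smul_apply_one, ← hh,
        mul_smul]
    rw [M.tr_congr hδ_eq hδ (hγ.comp (rmul_equivariant h)), M.tr_comp _ (rmul_equivariant h) γ hγ]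
    exact ⟨_, tr_mem_of_isEquivariant_endo M S hinv _ hs, rfl⟩
  · rintro _ ⟨s, hs, rfl⟩
    exact tr_mem_minSub M S γ hγ hs

theorem minSub_le_of_tr_mem {T : ∀ X : FinGSet G, Submonoid (N X)}
    (hT : ∀ {X Y : FinGSet G} (f : X.carrier → Y.carrier) (hf : IsEquivariant f),
      ∀ s ∈ T X, M.tr f hf s ∈ T Y)
    (hST : S ≤ T (GeObj G)) (X : FinGSet G) : minSub M S X ≤ T X :=
  (minSub_le_iff M S).2 fun γ hγ _ hs => hT γ hγ _ (hST hs)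

end minSub

theorem minSub_spec_general {G : Type} [Group G] [Fintype G] {N : FinGSet G → Type}
    [∀ X, CommMonoid (N X)] (M : SemiMackey G N)
    (S : Submonoid (N (GeObj G)))
    (hinv : ∀ g : G, ∀ s ∈ S, M.res (fun x => x * g) (rmul_equivariant g) s ∈ S) :
    (∀ X : FinGSet G, MulAction.IsPretransitive G X.carrier →
      ∀ (γ : (GeObj G).carrier → X.carrier) (hγ : IsEquivariant γ),
        (minSub M S X : Set (N X)) = (M.tr γ hγ) '' (S : Set (N (GeObj G)))) ∧
    (∀ {X Y : FinGSet G} (f : X.carrier → Y.carrier) (hf : IsEquivariant f),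
      (∀ s ∈ minSub M S Y, M.res f hf s ∈ minSub M S X) ∧
      (∀ s ∈ minSub M S X, M.tr f hf s ∈ minSub M S Y)) ∧
    minSub M S (GeObj G) = S ∧
    (∀ T : ∀ X : FinGSet G, Submonoid (N X),
      (∀ {X Y : FinGSet G} (f : X.carrier → Y.carrier) (hf : IsEquivariant f),
        ∀ s ∈ T Y, M.res f hf s ∈ T X) →
      (∀ {X Y : FinGSet G} (f : X.carrier → Y.carrier) (hf : IsEquivariant f),
        ∀ s ∈ T X, M.tr f hf s ∈ T Y) →
      S ≤ T (GeObj G) → ∀ X : FinGSet G, minSub M S X ≤ T X) :=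
  ⟨fun _ _ γ hγ => by rw [minSub_eq_map_of_isPretransitive M S hinv γ hγ, Submonoid.coe_map],
    fun f hf => ⟨fun _ hs => minSub_le_comap_res M S hinv f hf hs,
      fun _ hs => minSub_le_comap_tr M S f hf hs⟩,
    minSub_geObj M S hinv,
    fun _ _ hT hST => minSub_le_of_tr_mem M S hT hST⟩

/-- For a saturated `G`-invariant submonoid `S ⊆ M(G/e)`:
`ℒ_S(X) = γ_{X*}(S)` for every equivariant `γ_X : G/e → X` into a transitive
`X` (in particular this is independent of the choice of `γ_X`); `ℒ_S` is a
semi-Mackey subfunctor with `ℒ_S(G/e) = S`, and it is the minimum semi-Mackey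
subfunctor `𝒮` with `S ⊆ 𝒮(G/e)`. -/
theorem minSub_spec {G : Type} [Group G] [Fintype G] {N : FinGSet G → Type}
    [∀ X, CommMonoid (N X)] (M : SemiMackey G N)
    (S : Submonoid (N (GeObj G)))
    (hsat : satSet (S : Set (N (GeObj G))) = (S : Set (N (GeObj G))))
    (hinv : ∀ g : G, ∀ s ∈ S, M.res (fun x => x * g) (rmul_equivariant g) s ∈ S) :
    (∀ X : FinGSet G, MulAction.IsPretransitive G X.carrier →
      ∀ (γ : (GeObj G).carrier → X.carrier) (hγ : IsEquivariant γ),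
        (minSub M S X : Set (N X)) = (M.tr γ hγ) '' (S : Set (N (GeObj G)))) ∧
    (∀ {X Y : FinGSet G} (f : X.carrier → Y.carrier) (hf : IsEquivariant f),
      (∀ s ∈ minSub M S Y, M.res f hf s ∈ minSub M S X) ∧
      (∀ s ∈ minSub M S X, M.tr f hf s ∈ minSub M S Y)) ∧
    minSub M S (GeObj G) = S ∧
    (∀ T : ∀ X : FinGSet G, Submonoid (N X),
      (∀ {X Y : FinGSet G} (f : X.carrier → Y.carrier) (hf : IsEquivariant f),
        ∀ s ∈ T Y, M.res f hf s ∈ T X) →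
      (∀ {X Y : FinGSet G} (f : X.carrier → Y.carrier) (hf : IsEquivariant f),
        ∀ s ∈ T X, M.tr f hf s ∈ T Y) →
      S ≤ T (GeObj G) → ∀ X : FinGSet G, minSub M S X ≤ T X) :=
  minSub_spec_general M S hinv
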